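/- arXiv:2108.13405 — 2 statements merged into one kernel-verified Lean document; each statement's English description precedes it below -/
import Mathlib

section
/- The von Mises probability density f(θ) = exp(κ cos(θ - μ))/(2π I₀(κ)) integrates to 1 over [0, 2π), where I₀(κ) = ∑_{r=0}^∞ (κ²/4)^r/(r!)² is the modified Bessel function of the first kind of order zero. -/
/-!
Expand `exp (κ cos θ)` in its power series and integrate term by term (the series converges
uniformly on compacts). Odd powers of `cos` integrate to zero over a period, and Wallis' reduction
formula gives `∫₀^{2π} cos^{2r} = 2π (2r)! / (4^r (r!)²)`, so the `2r`-th term is exactly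
`2π (κ²/4)^r / (r!)²`. Periodicity removes `μ`, and the integral is positive, so `I₀ ≠ 0`.
-/

open Real intervalIntegral Nat

theorem hasSum_intervalIntegral_pow_div_factorial (g : C(ℝ, ℝ)) (a b : ℝ) :
    HasSum (fun n : ℕ => ∫ x in a..b, g x ^ n / n !) (∫ x in a..b, exp (g x)) := by
  let K : TopologicalSpace.Compacts ℝ := ⟨Set.uIcc a b, isCompact_uIcc⟩
  let f : ℕ → C(ℝ, ℝ) := fun n => (n ! : ℝ)⁻¹ • g ^ n
  have hrestrict : ∀ n, (f n).restrict K = (n ! : ℝ)⁻¹ • (g.restrict K) ^ n := fun _ => rfl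
  have h := hasSum_intervalIntegral_of_summable_norm (a := a) (b := b) (f := f) (by
    simpa only [K, hrestrict] using NormedSpace.norm_expSeries_summable' (𝕂 := ℝ) (g.restrict K))
  simpa [f, div_eq_inv_mul, exp_eq_exp_ℝ, NormedSpace.exp_eq_tsum ℝ] using h

theorem integral_cos_pow_odd_zero_two_pi (r : ℕ) :
    ∫ x in (0 : ℝ)..2 * π, cos x ^ (2 * r + 1) = 0 := by
  simpa using integral_sin_pow_mul_cos_pow_odd (a := 0) (b := 2 * π) 0 r

theorem integral_cos_pow_even_zero_two_pi (r : ℕ) :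
    ∫ x in (0 : ℝ)..2 * π, cos x ^ (2 * r) = 2 * π * (2 * r)! / (4 ^ r * (r ! : ℝ) ^ 2) := by
  induction r with
  | zero => simp
  | succ k ih =>
    rw [mul_add, mul_one, integral_cos_pow, ih, sin_two_pi, sin_zero,
      show 2 * k + 2 = (2 * k + 1) + 1 by ring, factorial_succ, factorial_succ, factorial_succ]
    push_cast
    field_simp
    ring

theorem integral_exp_mul_cos_zero_two_pi (κ : ℝ) :
    ∫ x in (0 : ℝ)..2 * π, exp (κ * cos x) = 2 * π * ∑' r : ℕ, (κ ^ 2 / 4) ^ r / (r ! : ℝ) ^ 2 := by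
  have h : HasSum (fun n : ℕ => ∫ x in (0 : ℝ)..2 * π, (κ * cos x) ^ n / n !)
      (∫ x in (0 : ℝ)..2 * π, exp (κ * cos x)) :=
    hasSum_intervalIntegral_pow_div_factorial ⟨fun x => κ * cos x, by fun_prop⟩ 0 (2 * π)
  have hodd : ∀ n ∉ Set.range (2 * ·), ∫ x in (0 : ℝ)..2 * π, (κ * cos x) ^ n / n ! = 0 := by
    rintro n hn
    obtain ⟨r, rfl⟩ : Odd n := Nat.not_even_iff_odd.1 fun ⟨r, hr⟩ => hn ⟨r, by simp only; omega⟩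
    simp [mul_pow, integral_cos_pow_odd_zero_two_pi]
  have heven : ∀ r : ℕ, ∫ x in (0 : ℝ)..2 * π, (κ * cos x) ^ (2 * r) / (2 * r)! =
      2 * π * ((κ ^ 2 / 4) ^ r / (r ! : ℝ) ^ 2) := fun r => by
    simp only [mul_pow, integral_div, integral_const_mul, integral_cos_pow_even_zero_two_pi]
    rw [div_pow, pow_mul]
    field_simp
  rw [← (Function.Injective.hasSum_iff (mul_right_injective₀ two_ne_zero) hodd).2 h |>.tsum_eq]
  simp only [Function.comp_def, heven, tsum_mul_left]

theorem Function.Periodic.intervalIntegral_comp_sub_right {E : Type*} [NormedAddCommGroup E]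
    [NormedSpace ℝ E] {f : ℝ → E} {T : ℝ} (hf : Function.Periodic f T) (t s : ℝ) :
    ∫ x in t..t + T, f (x - s) = ∫ x in t..t + T, f x := by
  rw [integral_comp_sub_right, show t + T - s = t - s + T by ring,
    hf.intervalIntegral_add_eq (t - s) t]

theorem stmt_9_general (κ μ : ℝ)
    (I₀ : ℝ) (hI₀ : I₀ = ∑' r : ℕ, (κ ^ 2 / 4) ^ r / (Nat.factorial r : ℝ) ^ 2) :
    ∫ θ in (0:ℝ)..(2 * π), Real.exp (κ * Real.cos (θ - μ)) / (2 * π * I₀) = 1 := by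
  have hperiodic : Function.Periodic (fun θ => exp (κ * cos θ)) (2 * π) := fun θ => by
    simp [cos_add_two_pi]
  have hpos : 0 < ∫ θ in (0:ℝ)..2 * π, exp (κ * cos θ) :=
    intervalIntegral_pos_of_pos_on (Continuous.intervalIntegrable (by fun_prop) _ _)
      (fun θ _ => exp_pos _) (by positivity)
  rw [integral_div, ← zero_add (2 * π), hperiodic.intervalIntegral_comp_sub_right, zero_add, hI₀,
    ← integral_exp_mul_cos_zero_two_pi]
  exact div_self hpos.ne'

theorem stmt_9 (κ μ : ℝ) (hκ : 0 ≤ κ)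
    (I₀ : ℝ) (hI₀ : I₀ = ∑' r : ℕ, (κ ^ 2 / 4) ^ r / (Nat.factorial r : ℝ) ^ 2) :
    ∫ θ in (0:ℝ)..(2 * π), Real.exp (κ * Real.cos (θ - μ)) / (2 * π * I₀) = 1 :=
  stmt_9_general κ μ I₀ hI₀
end

section
/- For symmetric positive semidefinite n×n matrices A and B, the Bures-Wasserstein quantity d_BW(A,B)² := trace(A) + trace(B) - 2·trace((√A · B · √A)^{1/2}) is nonnegative, and d_BW(A,B) = 0 when A = B. -/
open Matrix

section

open scoped ComplexOrder

/-- The matrix square root of a positive semidefinite matrix, as defined in Mathlib (Dec 2024). -/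
noncomputable def Matrix.PosSemidef.sqrt {n 𝕜 : Type*} [Fintype n] [DecidableEq n] [RCLike 𝕜]
    {A : Matrix n n 𝕜} (hA : A.PosSemidef) : Matrix n n 𝕜 :=
  hA.1.eigenvectorUnitary.1 * diagonal ((↑) ∘ (√·) ∘ hA.1.eigenvalues) *
    (star hA.1.eigenvectorUnitary : Matrix n n 𝕜)

end

/-!
Put `C = √A`, `D = √B` and `P = (C B C)^{1/2}`, so that `P² = (DC)ᴴ(DC)`. With `R` the
pseudo-inverse of `P`, the matrix `U = DCR` is a partial isometry with `tr (Uᴴ DC) = tr P`.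
Then, in Frobenius norms, `2 tr P = 2 ⟪Dᴴ U, C⟫ ≤ ‖Dᴴ U‖² + ‖C‖² ≤ ‖D‖² + ‖C‖² = tr B + tr A`,
the last inequality because `U Uᴴ` is an orthogonal projection.
When `A = B`, `C A C = A²`, whose square root is `A`.
-/

open scoped ComplexOrder MatrixOrder

namespace Matrix

section RCLike

variable {n 𝕜 : Type*} [Fintype n] [DecidableEq n] [RCLike 𝕜]

lemma PosSemidef.sqrt_eq_cfcSqrt {A : Matrix n n 𝕜} (hA : A.PosSemidef) :
    hA.sqrt = CFC.sqrt A := by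
  rw [CFC.sqrt_eq_real_sqrt A hA.nonneg, cfcₙ_eq_cfc, hA.1.cfc_eq, IsHermitian.cfc,
    Unitary.conjStarAlgAut_apply]
  rfl

lemma PosSemidef.isHermitian_sqrt {A : Matrix n n 𝕜} (hA : A.PosSemidef) :
    hA.sqrt.IsHermitian :=
  hA.sqrt_eq_cfcSqrt ▸ (CFC.sqrt_nonneg A).posSemidef.isHermitian

lemma PosSemidef.sqrt_mul_sqrt {A : Matrix n n 𝕜} (hA : A.PosSemidef) :
    hA.sqrt * hA.sqrt = A := by
  rw [hA.sqrt_eq_cfcSqrt, CFC.sqrt_mul_sqrt_self A hA.nonneg]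

lemma PosSemidef.sqrt_eq_of_eq_sqrt_mul_mul_sqrt {A S : Matrix n n 𝕜} (hA : A.PosSemidef)
    (hS : S.PosSemidef) (h : S = hA.sqrt * A * hA.sqrt) : hS.sqrt = A := by
  have hSA : S = A * A :=
    calc S = hA.sqrt * (hA.sqrt * hA.sqrt) * hA.sqrt := by rw [h, hA.sqrt_mul_sqrt]
      _ = hA.sqrt * hA.sqrt * (hA.sqrt * hA.sqrt) := by simp only [Matrix.mul_assoc]
      _ = A * A := by rw [hA.sqrt_mul_sqrt]
  rw [hS.sqrt_eq_cfcSqrt, hSA, CFC.sqrt_mul_self A hA.nonneg]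

lemma PosSemidef.trace_mul_le_trace {Q X : Matrix n n 𝕜} (hQ : Q.IsHermitian) (hQQ : Q * Q = Q)
    (hX : X.PosSemidef) : (Q * X).trace ≤ X.trace := by
  have hcompl : (1 - Q) * (1 - Q) = 1 - Q := by
    rw [sub_mul, mul_sub, mul_sub, hQQ]
    simp
  have := (hX.mul_mul_conjTranspose_same (1 - Q)).trace_nonneg
  rw [conjTranspose_sub, conjTranspose_one, hQ.eq, trace_mul_comm, ← Matrix.mul_assoc, hcompl,
    sub_mul, one_mul, trace_sub] at this
  exact sub_nonneg.mp this

end RCLike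

section Real

variable {n : Type*} [Fintype n]

lemma two_mul_trace_conjTranspose_mul_le (Y Z : Matrix n n ℝ) :
    2 * (Yᴴ * Z).trace ≤ (Yᴴ * Y).trace + (Zᴴ * Z).trace := by
  have hsq := (posSemidef_conjTranspose_mul_self (Y - Z)).trace_nonneg
  have hsymm : (Zᴴ * Y).trace = (Yᴴ * Z).trace := by
    simpa [conjTranspose_mul] using trace_conjTranspose (Yᴴ * Z)
  rw [conjTranspose_sub, sub_mul, mul_sub, mul_sub, trace_sub, trace_sub, trace_sub, hsymm] at hsq
  linarith

variable [DecidableEq n]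

lemma IsHermitian.exists_partialIsometry_trace_eq {P W : Matrix n n ℝ} (hP : P.IsHermitian)
    (h : P * P = Wᴴ * W) : ∃ U : Matrix n n ℝ, U * Uᴴ * U = U ∧ (Uᴴ * W).trace = P.trace := by
  have hmul (f g : ℝ → ℝ) : cfc (fun x => f x * g x) P = cfc f P * cfc g P :=
    cfc_mul f g P (P.finite_real_spectrum.continuousOn f) (P.finite_real_spectrum.continuousOn g)
  -- the Moore–Penrose pseudo-inverse of `P`, as `(0 : ℝ)⁻¹ = 0`
  set R := cfc (·⁻¹ : ℝ → ℝ) P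
  have hR : Rᴴ = R := (cfc_predicate _ P : IsSelfAdjoint R)
  have hRPP : R * (P * P) = P :=
    calc R * (P * P) = cfc (fun x : ℝ => x⁻¹ * (x * x)) P := by rw [hmul, hmul, cfc_id' ℝ P]
      _ = cfc (fun x : ℝ => x) P := cfc_congr fun x _ => by
        rcases eq_or_ne x 0 with rfl | hx <;> field_simp
      _ = P := cfc_id' ℝ P
  have hRPR : R * P * R = R :=
    calc R * P * R = cfc (fun x : ℝ => x⁻¹ * x * x⁻¹) P := by rw [hmul, hmul, cfc_id' ℝ P]
      _ = R := cfc_congr fun x _ => by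
        rcases eq_or_ne x 0 with rfl | hx <;> field_simp
  refine ⟨W * R, ?_, ?_⟩
  · calc W * R * (W * R)ᴴ * (W * R) = W * (R * R * (Wᴴ * W) * R) := by
          simp only [conjTranspose_mul, hR, Matrix.mul_assoc]
      _ = W * R := by rw [← h, Matrix.mul_assoc R R, hRPP, hRPR]
  · rw [conjTranspose_mul, hR, Matrix.mul_assoc, ← h, hRPP]

lemma IsHermitian.two_mul_trace_le {P C D : Matrix n n ℝ} (hP : P.IsHermitian)
    (h : P * P = (D * C)ᴴ * (D * C)) : 2 * P.trace ≤ (Cᴴ * C).trace + (Dᴴ * D).trace := by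
  obtain ⟨U, hU, hPU⟩ := hP.exists_partialIsometry_trace_eq h
  have hproj : (Uᴴ * D * (Dᴴ * U)).trace ≤ (Dᴴ * D).trace :=
    calc (Uᴴ * D * (Dᴴ * U)).trace = (U * Uᴴ * (D * Dᴴ)).trace := by
          rw [← Matrix.mul_assoc, Matrix.mul_assoc Uᴴ, trace_mul_cycle]
      _ ≤ (D * Dᴴ).trace :=
          (posSemidef_self_mul_conjTranspose D).trace_mul_le_trace
            (isHermitian_mul_conjTranspose_self U) (by rw [← Matrix.mul_assoc, hU])
      _ = (Dᴴ * D).trace := trace_mul_comm _ _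
  have hamgm := two_mul_trace_conjTranspose_mul_le (Dᴴ * U) C
  rw [conjTranspose_mul, conjTranspose_conjTranspose, Matrix.mul_assoc, hPU] at hamgm
  linarith

lemma PosSemidef.two_mul_trace_sqrt_le {A B S : Matrix n n ℝ} (hA : A.PosSemidef)
    (hB : B.PosSemidef) (hS : S.PosSemidef) (h : S = hA.sqrt * B * hA.sqrt) :
    2 * hS.sqrt.trace ≤ A.trace + B.trace := by
  have hC := hA.isHermitian_sqrt
  have hD := hB.isHermitian_sqrt
  have hPP : hS.sqrt * hS.sqrt = (hB.sqrt * hA.sqrt)ᴴ * (hB.sqrt * hA.sqrt) := by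
    rw [hS.sqrt_mul_sqrt, h, conjTranspose_mul, hC.eq, hD.eq, Matrix.mul_assoc hA.sqrt hB.sqrt,
      ← Matrix.mul_assoc hB.sqrt, hB.sqrt_mul_sqrt, Matrix.mul_assoc]
  have := hS.isHermitian_sqrt.two_mul_trace_le hPP
  rwa [hC.eq, hD.eq, hA.sqrt_mul_sqrt, hB.sqrt_mul_sqrt] at this

end Real

end Matrix

theorem stmt_11 (n : ℕ) (A B S : Matrix (Fin n) (Fin n) ℝ)
    (hA : A.PosSemidef) (hB : B.PosSemidef)
    (hSeq : S = hA.sqrt * B * hA.sqrt) (hS : S.PosSemidef) :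
    0 ≤ A.trace + B.trace - 2 * (hS.sqrt).trace ∧
    (A = B → A.trace + B.trace - 2 * (hS.sqrt).trace = 0) := by
  refine ⟨by linarith [hA.two_mul_trace_sqrt_le hB hS hSeq], fun hAB => ?_⟩
  subst hAB
  rw [hA.sqrt_eq_of_eq_sqrt_mul_mul_sqrt hS hSeq]
  ring
end
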